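/- For a pure bipartite state ρ_AR with Schmidt coefficient distribution P_X, the bipartite SDP f_max(P_X, ε) = inf { λ : λ·𝟙_A ⊗ ρ_R ≥ σ_AR, Tr[ρ_AR σ_AR] ≥ 1 − ε², σ_R ≤ ρ_R, σ_AR ≥ 0 } equals the single-system SDP f_SDP(P_X, ε) = inf { λ : λ·𝟙 ≥ θ, 𝒫(θ) ≤ 𝟙, Tr[ψ_X θ] ≥ 1 − ε², θ ≥ 0 }. -/

import Mathlib

open Matrix Finset
open scoped ComplexOrder Kronecker

/-- Outer product `|v⟩⟨v|`. -/
noncomputable def outer {n : Type*} (v : n → ℂ) : Matrix n n ℂ :=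
  Matrix.of fun i j => v i * star (v j)

/-- Partial trace over the first (A) factor. -/
noncomputable def ptraceA {dA dR : ℕ} (σ : Matrix (Fin dA × Fin dR) (Fin dA × Fin dR) ℂ) :
    Matrix (Fin dR) (Fin dR) ℂ :=
  Matrix.of fun r r' => ∑ a, σ (a, r) (a, r')

/-- The purification vector `|ρ⟩ = Σ_x √(p_x) |xx⟩`. -/
noncomputable def schmidtVec {d : ℕ} (p : Fin d → ℝ) : Fin d × Fin d → ℂ :=
  fun xy => if xy.1 = xy.2 then (Real.sqrt (p xy.1) : ℂ) else 0

/-- The bipartite SDP `f_max(P_X, ε)` for the pure state with Schmidt coefficients `p`. -/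
noncomputable def fMax {d : ℕ} (p : Fin d → ℝ) (ε : ℝ) : ℝ :=
  sInf {l : ℝ | 0 ≤ l ∧ ∃ σ : Matrix (Fin d × Fin d) (Fin d × Fin d) ℂ,
    ((l : ℂ) • ((1 : Matrix (Fin d) (Fin d) ℂ) ⊗ₖ (Matrix.diagonal fun x => (p x : ℂ))) - σ).PosSemidef ∧
    1 - ε ^ 2 ≤ (((outer (schmidtVec p)) * σ).trace).re ∧
    ((Matrix.diagonal fun x => (p x : ℂ)) - ptraceA σ).PosSemidef ∧
    σ.PosSemidef}

/-- The pinching map `𝒫(θ) = Σ_x |x⟩⟨x| ⟨x|θ|x⟩`. -/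
noncomputable def pinch {d : ℕ} (θ : Matrix (Fin d) (Fin d) ℂ) : Matrix (Fin d) (Fin d) ℂ :=
  Matrix.diagonal fun x => θ x x

/-- The single-system SDP `f_SDP(P_X, ε)`, with `ψ_X = |ψ_X⟩⟨ψ_X|`, `|ψ_X⟩ = Σ_x p_x |x⟩`. -/
noncomputable def fSDP {d : ℕ} (p : Fin d → ℝ) (ε : ℝ) : ℝ :=
  sInf {l : ℝ | 0 ≤ l ∧ ∃ θ : Matrix (Fin d) (Fin d) ℂ,
    ((l : ℂ) • (1 : Matrix (Fin d) (Fin d) ℂ) - θ).PosSemidef ∧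
    ((1 : Matrix (Fin d) (Fin d) ℂ) - pinch θ).PosSemidef ∧
    1 - ε ^ 2 ≤ (((outer fun x => (p x : ℂ)) * θ).trace).re ∧
    θ.PosSemidef}

/-! The two programs are related by `V = schmidtEmbed p`, `V|x⟩ = √p_x |xx⟩`, and
`W = schmidtCompress p`, `W|xx⟩ = p_x^{-1/2} |x⟩`: `θ ↦ VθV†` and `σ ↦ WσW†` send feasible points
to feasible points with the same `λ`. The fidelity constraints agree because `V†|ρ⟩ = |ψ_X⟩` and
`W†|ψ_X⟩ = |ρ⟩`. The operator constraints transfer because `𝟙 ⊗ ρ_R - VV†` and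
`𝟙 - W(𝟙 ⊗ ρ_R)W†` are positive diagonal matrices, `Tr_A(VθV†) = diag(p_x θ_xx)`, and
`σ_{xx,xx} ≤ (σ_R)_{xx} ≤ p_x`. -/

lemma outer_eq_vecMulVec {ι : Type*} (v : ι → ℂ) : outer v = vecMulVec v (star v) := rfl

section Conjugation

variable {m n : Type*} [Fintype n]

lemma conjTranspose_mul_outer_mul (B : Matrix n m ℂ) (v : n → ℂ) :
    Bᴴ * outer v * B = outer (Bᴴ *ᵥ v) := by
  rw [outer_eq_vecMulVec, outer_eq_vecMulVec, mul_vecMulVec, vecMulVec_mul, star_mulVec,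
    conjTranspose_conjTranspose]

lemma trace_outer_mul_conj [Fintype m] (B : Matrix n m ℂ) (M : Matrix m m ℂ) (v : n → ℂ) :
    (outer v * (B * M * Bᴴ)).trace = (outer (Bᴴ *ᵥ v) * M).trace := by
  rw [← conjTranspose_mul_outer_mul, ← Matrix.mul_assoc, ← Matrix.mul_assoc, trace_mul_cycle]
  simp only [Matrix.mul_assoc]

end Conjugation

section SchmidtMaps

variable {d : ℕ}

noncomputable def schmidtEmbed (p : Fin d → ℝ) : Matrix (Fin d × Fin d) (Fin d) ℂ :=
  Matrix.of fun ar x => if ar.1 = x ∧ ar.2 = x then (√(p x) : ℂ) else 0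

/-- For `p x = 0` the entry is `0⁻¹ = 0`, so `W (𝟙 ⊗ ρ_R) W†` is the projection onto the support
of `p` rather than `𝟙`. -/
noncomputable def schmidtCompress (p : Fin d → ℝ) : Matrix (Fin d) (Fin d × Fin d) ℂ :=
  Matrix.of fun x ar => if ar.1 = x ∧ ar.2 = x then (((√(p x))⁻¹ : ℝ) : ℂ) else 0

lemma schmidtEmbed_mul_mul_conjTranspose_apply (p : Fin d → ℝ) (θ : Matrix (Fin d) (Fin d) ℂ)
    (a r a' r' : Fin d) :
    (schmidtEmbed p * θ * (schmidtEmbed p)ᴴ) (a, r) (a', r') =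
      if a = r ∧ a' = r' then (√(p a) : ℂ) * θ a a' * √(p a') else 0 := by
  simp only [mul_apply, conjTranspose_apply, schmidtEmbed, of_apply]
  simp only [ite_and, ite_mul, zero_mul, sum_ite_eq, mem_univ, ↓reduceIte, RCLike.star_def,
    apply_ite (starRingEnd ℂ), Complex.conj_ofReal, map_zero, mul_ite, mul_zero]
  split_ifs <;> simp_all

lemma schmidtCompress_mul_mul_conjTranspose_apply (p : Fin d → ℝ)
    (M : Matrix (Fin d × Fin d) (Fin d × Fin d) ℂ) (x y : Fin d) :
    (schmidtCompress p * M * (schmidtCompress p)ᴴ) x y =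
      (((√(p x))⁻¹ : ℝ) : ℂ) * M (x, x) (y, y) * (((√(p y))⁻¹ : ℝ) : ℂ) := by
  simp only [mul_apply, conjTranspose_apply, schmidtCompress, of_apply, Fintype.sum_prod_type]
  simp [ite_and, apply_ite (starRingEnd ℂ)]

lemma conjTranspose_schmidtEmbed_mulVec_schmidtVec {p : Fin d → ℝ} (hp : ∀ x, 0 ≤ p x) :
    (schmidtEmbed p)ᴴ *ᵥ schmidtVec p = fun x => (p x : ℂ) := by
  funext x
  simp only [mulVec, dotProduct, conjTranspose_apply, schmidtEmbed, of_apply, schmidtVec,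
    Fintype.sum_prod_type]
  simp [ite_and, apply_ite (starRingEnd ℂ), ← Complex.ofReal_mul, Real.mul_self_sqrt (hp x)]

lemma conjTranspose_schmidtCompress_mulVec (p : Fin d → ℝ) :
    (schmidtCompress p)ᴴ *ᵥ (fun x => (p x : ℂ)) = schmidtVec p := by
  ext ⟨a, r⟩
  simp only [mulVec, dotProduct, conjTranspose_apply, schmidtCompress, of_apply, schmidtVec]
  by_cases h : a = r
  · subst h
    simp only [and_self, Complex.ofReal_inv, RCLike.star_def, apply_ite (starRingEnd ℂ), map_inv₀,
      Complex.conj_ofReal, map_zero, ite_mul, zero_mul, sum_ite_eq, mem_univ, ↓reduceIte]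
    norm_cast
    rw [inv_mul_eq_div, Real.div_sqrt]
  · rw [if_neg h]
    refine sum_eq_zero fun x _ => ?_
    rw [if_neg fun hx => h (hx.1.trans hx.2.symm), star_zero, zero_mul]

lemma one_kronecker_diagonal (p : Fin d → ℝ) :
    (1 : Matrix (Fin d) (Fin d) ℂ) ⊗ₖ diagonal (fun x => (p x : ℂ)) =
      diagonal fun ar => (p ar.2 : ℂ) := by
  rw [← diagonal_one, diagonal_kronecker_diagonal]
  simp only [one_mul]

lemma schmidtEmbed_mul_conjTranspose {p : Fin d → ℝ} (hp : ∀ x, 0 ≤ p x) :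
    schmidtEmbed p * (schmidtEmbed p)ᴴ =
      diagonal fun ar => if ar.1 = ar.2 then (p ar.2 : ℂ) else 0 := by
  ext ⟨a, r⟩ ⟨a', r'⟩
  have hE := schmidtEmbed_mul_mul_conjTranspose_apply p 1 a r a' r'
  rw [Matrix.mul_one] at hE
  have hsq : ∀ x, (√(p x) : ℂ) * √(p x) = p x := fun x => by
    exact_mod_cast Real.mul_self_sqrt (hp x)
  rw [hE, diagonal_apply]
  simp only [Prod.mk.injEq, one_apply]
  split_ifs <;> grind

lemma posSemidef_one_kronecker_diagonal_sub_schmidtEmbed {p : Fin d → ℝ} (hp : ∀ x, 0 ≤ p x) :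
    ((1 : Matrix (Fin d) (Fin d) ℂ) ⊗ₖ diagonal (fun x => (p x : ℂ)) -
      schmidtEmbed p * (schmidtEmbed p)ᴴ).PosSemidef := by
  rw [one_kronecker_diagonal, schmidtEmbed_mul_conjTranspose hp, diagonal_sub,
    posSemidef_diagonal_iff]
  intro ar
  split_ifs
  · simp
  · simpa using hp ar.2

lemma inv_sqrt_mul_mul_inv_sqrt_le_one {t : ℝ} (ht : 0 ≤ t) {z : ℂ} (hz : z ≤ t) :
    (((√t)⁻¹ : ℝ) : ℂ) * z * (((√t)⁻¹ : ℝ) : ℂ) ≤ 1 := by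
  have hs : (0 : ℂ) ≤ (((√t)⁻¹ : ℝ) : ℂ) := by exact_mod_cast inv_nonneg.2 (Real.sqrt_nonneg t)
  calc (((√t)⁻¹ : ℝ) : ℂ) * z * (((√t)⁻¹ : ℝ) : ℂ)
      ≤ (((√t)⁻¹ : ℝ) : ℂ) * t * (((√t)⁻¹ : ℝ) : ℂ) := by gcongr
    _ = ((t * (√t * √t)⁻¹ : ℝ) : ℂ) := by push_cast; ring
    _ ≤ 1 := by rw [Real.mul_self_sqrt ht]; exact_mod_cast mul_inv_le_one

lemma posSemidef_one_sub_schmidtCompress_one_kronecker_diagonal {p : Fin d → ℝ}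
    (hp : ∀ x, 0 ≤ p x) :
    (1 - schmidtCompress p * ((1 : Matrix (Fin d) (Fin d) ℂ) ⊗ₖ diagonal (fun x => (p x : ℂ))) *
      (schmidtCompress p)ᴴ).PosSemidef := by
  have hdiag : schmidtCompress p *
      ((1 : Matrix (Fin d) (Fin d) ℂ) ⊗ₖ diagonal (fun x => (p x : ℂ))) * (schmidtCompress p)ᴴ =
      diagonal fun x => (((√(p x))⁻¹ : ℝ) : ℂ) * p x * (((√(p x))⁻¹ : ℝ) : ℂ) := by
    ext x y
    rw [schmidtCompress_mul_mul_conjTranspose_apply, one_kronecker_diagonal]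
    by_cases h : x = y
    · subst h
      simp
    · simp [h]
  rw [hdiag, ← diagonal_one, diagonal_sub, posSemidef_diagonal_iff]
  exact fun x => sub_nonneg.2 (inv_sqrt_mul_mul_inv_sqrt_le_one (hp x) le_rfl)

lemma ptraceA_schmidtEmbed_mul_mul {p : Fin d → ℝ} (hp : ∀ x, 0 ≤ p x)
    (θ : Matrix (Fin d) (Fin d) ℂ) :
    ptraceA (schmidtEmbed p * θ * (schmidtEmbed p)ᴴ) = diagonal fun r => (p r : ℂ) * θ r r := by
  ext r r'
  simp only [ptraceA, of_apply, schmidtEmbed_mul_mul_conjTranspose_apply, diagonal_apply]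
  split_ifs with h
  · subst h
    have hsq : (√(p r) : ℂ) * √(p r) = p r := by exact_mod_cast Real.mul_self_sqrt (hp r)
    simp only [and_self, sum_ite_eq', mem_univ, if_true]
    linear_combination θ r r * hsq
  · exact sum_eq_zero fun a _ => if_neg fun ha => h (ha.1.symm.trans ha.2)

lemma diag_le_ptraceA {n : ℕ} {σ : Matrix (Fin n × Fin d) (Fin n × Fin d) ℂ} (hσ : σ.PosSemidef)
    (a : Fin n) (r : Fin d) : σ (a, r) (a, r) ≤ ptraceA σ r r :=
  single_le_sum (f := fun a => σ (a, r) (a, r)) (fun _ _ => hσ.diag_nonneg) (mem_univ a)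

end SchmidtMaps

section Transfer

variable {d : ℕ} {p : Fin d → ℝ}

lemma posSemidef_smul_one_kronecker_diagonal_sub_schmidtEmbed (hp : ∀ x, 0 ≤ p x) {l : ℝ}
    (hl : 0 ≤ l) {θ : Matrix (Fin d) (Fin d) ℂ} (hθ : ((l : ℂ) • 1 - θ).PosSemidef) :
    ((l : ℂ) • ((1 : Matrix (Fin d) (Fin d) ℂ) ⊗ₖ diagonal fun x => (p x : ℂ)) -
      schmidtEmbed p * θ * (schmidtEmbed p)ᴴ).PosSemidef := by
  set E := schmidtEmbed p
  have hsplit : (l : ℂ) • ((1 : Matrix (Fin d) (Fin d) ℂ) ⊗ₖ diagonal fun x => (p x : ℂ)) -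
      E * θ * Eᴴ = E * ((l : ℂ) • 1 - θ) * Eᴴ +
        (l : ℂ) • ((1 : Matrix (Fin d) (Fin d) ℂ) ⊗ₖ diagonal (fun x => (p x : ℂ)) - E * Eᴴ) := by
    rw [Matrix.mul_sub, Matrix.sub_mul, Matrix.mul_smul, Matrix.smul_mul, Matrix.mul_one,
      smul_sub]
    abel
  rw [hsplit]
  exact (hθ.mul_mul_conjTranspose_same E).add
    ((posSemidef_one_kronecker_diagonal_sub_schmidtEmbed hp).smul (by exact_mod_cast hl))

lemma posSemidef_smul_one_sub_schmidtCompress (hp : ∀ x, 0 ≤ p x) {l : ℝ} (hl : 0 ≤ l)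
    {σ : Matrix (Fin d × Fin d) (Fin d × Fin d) ℂ}
    (hσ : ((l : ℂ) • ((1 : Matrix (Fin d) (Fin d) ℂ) ⊗ₖ diagonal fun x => (p x : ℂ)) -
      σ).PosSemidef) :
    ((l : ℂ) • 1 - schmidtCompress p * σ * (schmidtCompress p)ᴴ).PosSemidef := by
  set F := schmidtCompress p
  have hsplit : (l : ℂ) • 1 - F * σ * Fᴴ =
      F * ((l : ℂ) • ((1 : Matrix (Fin d) (Fin d) ℂ) ⊗ₖ diagonal fun x => (p x : ℂ)) - σ) * Fᴴ +
        (l : ℂ) • (1 - F * ((1 : Matrix (Fin d) (Fin d) ℂ) ⊗ₖ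
          diagonal fun x => (p x : ℂ)) * Fᴴ) := by
    rw [Matrix.mul_sub, Matrix.sub_mul, Matrix.mul_smul, Matrix.smul_mul, smul_sub]
    abel
  rw [hsplit]
  exact (hσ.mul_mul_conjTranspose_same F).add
    ((posSemidef_one_sub_schmidtCompress_one_kronecker_diagonal hp).smul (by exact_mod_cast hl))

lemma posSemidef_one_sub_pinch_schmidtCompress (hp : ∀ x, 0 ≤ p x)
    {σ : Matrix (Fin d × Fin d) (Fin d × Fin d) ℂ} (hσ : σ.PosSemidef)
    (hR : (diagonal (fun x => (p x : ℂ)) - ptraceA σ).PosSemidef) :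
    (1 - pinch (schmidtCompress p * σ * (schmidtCompress p)ᴴ)).PosSemidef := by
  rw [pinch, ← diagonal_one, diagonal_sub, posSemidef_diagonal_iff]
  intro x
  have hx : 0 ≤ (diagonal (fun x => (p x : ℂ)) - ptraceA σ) x x := hR.diag_nonneg
  rw [Matrix.sub_apply, diagonal_apply_eq, sub_nonneg] at hx
  rw [schmidtCompress_mul_mul_conjTranspose_apply, sub_nonneg]
  exact inv_sqrt_mul_mul_inv_sqrt_le_one (hp x) ((diag_le_ptraceA hσ x x).trans hx)

lemma posSemidef_diagonal_sub_ptraceA_schmidtEmbed (hp : ∀ x, 0 ≤ p x)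
    {θ : Matrix (Fin d) (Fin d) ℂ} (hθ : (1 - pinch θ).PosSemidef) :
    (diagonal (fun x => (p x : ℂ)) -
      ptraceA (schmidtEmbed p * θ * (schmidtEmbed p)ᴴ)).PosSemidef := by
  rw [ptraceA_schmidtEmbed_mul_mul hp, diagonal_sub, posSemidef_diagonal_iff]
  intro r
  have hr : 0 ≤ (1 - pinch θ) r r := hθ.diag_nonneg
  rw [pinch, ← diagonal_one, diagonal_sub, diagonal_apply_eq] at hr
  calc (0 : ℂ) ≤ p r * (1 - θ r r) := mul_nonneg (by exact_mod_cast hp r) hr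
    _ = p r - p r * θ r r := by ring

end Transfer

theorem fMax_eq_fSDP_general {d : ℕ} (p : Fin d → ℝ) (hp : ∀ x, 0 ≤ p x) (ε : ℝ) :
    fMax p ε = fSDP p ε := by
  unfold fMax fSDP
  congr 1
  ext l
  constructor
  · rintro ⟨hl, σ, hσl, hσε, hσR, hσ⟩
    refine ⟨hl, schmidtCompress p * σ * (schmidtCompress p)ᴴ,
      posSemidef_smul_one_sub_schmidtCompress hp hl hσl,
      posSemidef_one_sub_pinch_schmidtCompress hp hσ hσR, ?_, hσ.mul_mul_conjTranspose_same _⟩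
    rwa [trace_outer_mul_conj, conjTranspose_schmidtCompress_mulVec]
  · rintro ⟨hl, θ, hθl, hθP, hθε, hθ⟩
    refine ⟨hl, schmidtEmbed p * θ * (schmidtEmbed p)ᴴ,
      posSemidef_smul_one_kronecker_diagonal_sub_schmidtEmbed hp hl hθl, ?_,
      posSemidef_diagonal_sub_ptraceA_schmidtEmbed hp hθP, hθ.mul_mul_conjTranspose_same _⟩
    rwa [trace_outer_mul_conj, conjTranspose_schmidtEmbed_mulVec_schmidtVec hp]

/-- for a pure bipartite state with Schmidt distribution `P_X`,
`f_max(P_X, ε) = f_SDP(P_X, ε)`. -/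
theorem fMax_eq_fSDP {d : ℕ} (p : Fin d → ℝ) (hp : ∀ x, 0 ≤ p x)
    (hps : ∑ x, p x = 1) (ε : ℝ) (hε : ε ∈ Set.Ioo (0 : ℝ) 1) :
    fMax p ε = fSDP p ε :=
  fMax_eq_fSDP_general p hp ε
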